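/- arXiv:2601.13080 — 5 statements merged into one kernel-verified Lean document; each statement's English description precedes it below -/
import Mathlib

section
/- The logarithmic mean θ(u,v), defined for u,v > 0 as (u−v)/(log u − log v) when u ≠ v and as v when u = v, is strictly increasing in each argument on (0,∞)×(0,∞). -/
/-- The logarithmic mean. -/
noncomputable def logMean (u v : ℝ) : ℝ :=
  if u = v then v else (u - v) / (Real.log u - Real.log v)

lemma logMean_symm (u v : ℝ) : logMean u v = logMean v u := by
  unfold logMean
  rcases eq_or_ne u v with rfl | hne
  · simp
  · rw [if_neg hne, if_neg hne.symm, ← neg_div_neg_eq]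
    ring_nf

lemma logMean_eq_integral (u v : ℝ) (hu : 0 < u) (hv : 0 < v) :
    logMean u v = ∫ t in (0:ℝ)..1,
      Real.exp (t * (Real.log u - Real.log v) + Real.log v) := by
  unfold logMean
  rcases eq_or_ne u v with rfl | hne
  · simp [Real.exp_log hv]
  · rw [if_neg hne]
    set a := Real.log u - Real.log v with ha
    have hane : a ≠ 0 := by
      rw [ha, sub_ne_zero]
      exact fun hlog => hne (Real.log_injOn_pos (Set.mem_Ioi.mpr hu)
        (Set.mem_Ioi.mpr hv) hlog)
    have key : ∀ t : ℝ, HasDerivAt (fun s => Real.exp (s * a + Real.log v) / a)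
        (Real.exp (t * a + Real.log v)) t := by
      intro t
      have h1 : HasDerivAt (fun s : ℝ => s * a + Real.log v) a t := by
        simpa using ((hasDerivAt_id t).mul_const a).add_const (Real.log v)
      have h2 := (h1.exp).div_const a
      simpa [mul_div_assoc, mul_comm, mul_div_cancel_left₀ _ hane] using h2
    rw [intervalIntegral.integral_eq_sub_of_hasDerivAt (fun t _ => key t)
      ((Real.continuous_exp.comp (by continuity)).intervalIntegrable 0 1)]
    have e1 : Real.exp (1 * a + Real.log v) = u := by
      rw [one_mul, ha, sub_add_cancel, Real.exp_log hu]
    have e2 : Real.exp (0 * a + Real.log v) = v := by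
      rw [zero_mul, zero_add, Real.exp_log hv]
    rw [e1, e2, div_sub_div_same]

/-- The logarithmic mean is strictly increasing in each argument on (0,∞)×(0,∞). -/
theorem logMean_strictMono (u₁ u₂ v : ℝ) (hu₁ : 0 < u₁) (hu₂ : 0 < u₂) (hv : 0 < v)
    (h : u₁ < u₂) :
    logMean u₁ v < logMean u₂ v ∧ logMean v u₁ < logMean v u₂ := by
  have main : logMean u₁ v < logMean u₂ v := by
    rw [logMean_eq_integral u₁ v hu₁ hv, logMean_eq_integral u₂ v hu₂ hv]
    set f₁ : ℝ → ℝ := fun t => Real.exp (t * (Real.log u₁ - Real.log v) + Real.log v)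
    set f₂ : ℝ → ℝ := fun t => Real.exp (t * (Real.log u₂ - Real.log v) + Real.log v)
    have hc₁ : Continuous f₁ := Real.continuous_exp.comp (by continuity)
    have hc₂ : Continuous f₂ := Real.continuous_exp.comp (by continuity)
    have hi₁ := hc₁.intervalIntegrable (μ := MeasureTheory.volume) (0:ℝ) 1
    have hi₂ := hc₂.intervalIntegrable (μ := MeasureTheory.volume) (0:ℝ) 1
    have hpos : ∀ t ∈ Set.Ioo (0:ℝ) 1, 0 < (f₂ - f₁) t := by
      intro t ht
      have hlog : Real.log u₁ < Real.log u₂ := Real.log_lt_log hu₁ h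
      have : t * (Real.log u₁ - Real.log v) < t * (Real.log u₂ - Real.log v) :=
        mul_lt_mul_of_pos_left (by linarith) ht.1
      simp only [Pi.sub_apply, sub_pos, f₁, f₂]
      exact Real.exp_lt_exp.mpr (by linarith)
    have := intervalIntegral.intervalIntegral_pos_of_pos_on (hi₂.sub hi₁) hpos one_pos
    rw [intervalIntegral.integral_sub hi₂ hi₁] at this
    linarith
  exact ⟨main, by rw [logMean_symm v u₁, logMean_symm v u₂]; exact main⟩
end

section
/- For all s, t > 0 and all u, v ≥ 0, the logarithmic mean satisfies the supergradient inequality ∂₁θ(s,t)·u + ∂₂θ(s,t)·v ≥ θ(u,v), with equality when (u,v) = (s,t). (Here θ is extended by θ(u,v) = 0 if u = 0 or v = 0.) -/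
/-- The logarithmic mean, extended by 0 on the boundary of [0,∞)². -/
noncomputable def logMean0 (u v : ℝ) : ℝ :=
  if u ≤ 0 ∨ v ≤ 0 then 0
  else if u = v then v else (u - v) / (Real.log u - Real.log v)

/-!
For positive arguments `θ(u, v) = ∫₀¹ u ^ r * v ^ (1 - r) dr`. Each weighted geometric mean
`u ^ r * v ^ (1 - r)` is 1-homogeneous and, by weighted AM–GM, lies below its tangent plane at
`(s, t)`, a plane through the origin. Differentiating under the integral sign, the partial
derivatives of `θ` at `(s, t)` are the integrals of those of the geometric means, so integrating
the pointwise tangent inequalities over `r` gives the supergradient inequality, and integrating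
Euler's identity gives the equality case. On the boundary `θ` vanishes while both partial
derivatives are nonnegative.
-/

open Real Set Filter Topology intervalIntegral
open scoped Interval

theorem hasDerivAt_intervalIntegral_of_continuousOn {E : Type*} [NormedAddCommGroup E]
    [NormedSpace ℝ E] {F F' : ℝ → ℝ → E} {K : Set ℝ} {x₀ a b : ℝ}
    (hK : K ∈ 𝓝 x₀) (hKc : IsCompact K) (hF : ∀ x ∈ K, ContinuousOn (F x) [[a, b]])
    (hF' : ContinuousOn (Function.uncurry F') (K ×ˢ [[a, b]]))
    (hderiv : ∀ x ∈ K, ∀ r ∈ [[a, b]], HasDerivAt (F · r) (F' x r) x) :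
    HasDerivAt (fun x => ∫ r in a..b, F x r) (∫ r in a..b, F' x₀ r) x₀ := by
  obtain ⟨C, hC⟩ := (hKc.prod isCompact_uIcc).exists_bound_of_continuousOn hF'
  have hx₀ : x₀ ∈ K := mem_of_mem_nhds hK
  have hF'x₀ : ContinuousOn (F' x₀) [[a, b]] :=
    hF'.comp (continuousOn_const.prodMk continuousOn_id) fun r hr => ⟨hx₀, hr⟩
  refine (hasDerivAt_integral_of_dominated_loc_of_deriv_le (bound := fun _ => C) hK ?_
    (hF x₀ hx₀).intervalIntegrable ?_ ?_ intervalIntegrable_const ?_).2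
  · filter_upwards [hK] with x hx
    exact ((hF x hx).mono uIoc_subset_uIcc).aestronglyMeasurable measurableSet_uIoc
  · exact (hF'x₀.mono uIoc_subset_uIcc).aestronglyMeasurable measurableSet_uIoc
  · exact .of_forall fun r hr x hx => hC (x, r) ⟨hx, uIoc_subset_uIcc hr⟩
  · exact .of_forall fun r hr x hx => hderiv x hx r (uIoc_subset_uIcc hr)

theorem integral_const_rpow_zero_one {c : ℝ} (hc : 0 < c) (hc₁ : c ≠ 1) :
    ∫ r in (0 : ℝ)..1, c ^ r = (c - 1) / log c := by
  have hlog : log c ≠ 0 := log_ne_zero_of_pos_of_ne_one hc hc₁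
  have hderiv : ∀ r ∈ [[(0 : ℝ), 1]], HasDerivAt (fun r => c ^ r / log c) (c ^ r) r :=
    fun r _ => by simpa [hlog] using (hasStrictDerivAt_const_rpow hc r).hasDerivAt.div_const (log c)
  rw [integral_eq_sub_of_hasDerivAt hderiv
    (Continuous.intervalIntegrable (by fun_prop (disch := positivity)) _ _)]
  simp only [rpow_one, rpow_zero]
  ring

theorem logMean0_eq_integral {u v : ℝ} (hu : 0 < u) (hv : 0 < v) :
    logMean0 u v = ∫ r in (0 : ℝ)..1, u ^ r * v ^ (1 - r) := by
  have hgeom : ∀ r : ℝ, u ^ r * v ^ (1 - r) = v * (u / v) ^ r := fun r => by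
    rw [div_rpow hu.le hv.le, rpow_sub hv, rpow_one]
    field_simp
  simp_rw [hgeom, integral_const_mul]
  rw [logMean0, if_neg (by simp [hu, hv])]
  split_ifs with huv
  · simp [huv, hv.ne']
  · rw [integral_const_rpow_zero_one (div_pos hu hv) (div_ne_one_of_ne huv),
      log_div hu.ne' hv.ne']
    have : log u - log v ≠ 0 := sub_ne_zero.2 fun h => huv (log_injOn_pos hu hv h)
    field_simp

theorem hasDerivAt_logMean0_left {s t : ℝ} (hs : 0 < s) (ht : 0 < t) :
    HasDerivAt (logMean0 · t) (∫ r in (0 : ℝ)..1, r * s ^ (r - 1) * t ^ (1 - r)) s := by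
  have hK : Icc (s / 2) (2 * s) ∈ 𝓝 s := Icc_mem_nhds (by linarith) (by linarith)
  have hpos : ∀ x ∈ Icc (s / 2) (2 * s), 0 < x := fun x hx => by linarith [hx.1]
  refine (hasDerivAt_intervalIntegral_of_continuousOn (F := fun x r => x ^ r * t ^ (1 - r))
    (F' := fun x r => r * x ^ (r - 1) * t ^ (1 - r)) hK isCompact_Icc
    (fun x hx => by have := hpos x hx; fun_prop (disch := positivity)) ?_
    (fun x hx r _ => ?_)).congr_of_eventuallyEq ?_
  · refine .mul (.mul (by fun_prop) ?_) (by fun_prop (disch := positivity))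
    exact .rpow (by fun_prop) (by fun_prop) fun p hp => .inl (hpos p.1 hp.1).ne'
  · exact (hasDerivAt_rpow_const (.inl (hpos x hx).ne')).mul_const _
  · filter_upwards [eventually_gt_nhds hs] with x hx using logMean0_eq_integral hx ht

theorem hasDerivAt_logMean0_right {s t : ℝ} (hs : 0 < s) (ht : 0 < t) :
    HasDerivAt (logMean0 s ·) (∫ r in (0 : ℝ)..1, (1 - r) * s ^ r * t ^ (-r)) t := by
  have hK : Icc (t / 2) (2 * t) ∈ 𝓝 t := Icc_mem_nhds (by linarith) (by linarith)
  have hpos : ∀ y ∈ Icc (t / 2) (2 * t), 0 < y := fun y hy => by linarith [hy.1]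
  refine (hasDerivAt_intervalIntegral_of_continuousOn (F := fun y r => s ^ r * y ^ (1 - r))
    (F' := fun y r => (1 - r) * s ^ r * y ^ (-r)) hK isCompact_Icc
    (fun y hy => by have := hpos y hy; fun_prop (disch := positivity)) ?_
    (fun y hy r _ => ?_)).congr_of_eventuallyEq ?_
  · refine .mul (by fun_prop (disch := positivity)) ?_
    exact .rpow (by fun_prop) (by fun_prop) fun p hp => .inl (hpos p.1 hp.1).ne'
  · have h := (hasDerivAt_rpow_const (p := 1 - r) (.inl (hpos y hy).ne')).const_mul (s ^ r)
    rwa [sub_sub_cancel_left, ← mul_assoc, mul_comm (s ^ r)] at h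
  · filter_upwards [eventually_gt_nhds ht] with y hy using logMean0_eq_integral hs hy

theorem rpow_mul_rpow_one_sub_le_tangent {r s t u v : ℝ} (hr₀ : 0 ≤ r) (hr₁ : r ≤ 1)
    (hs : 0 < s) (ht : 0 < t) (hu : 0 ≤ u) (hv : 0 ≤ v) :
    u ^ r * v ^ (1 - r) ≤ r * s ^ (r - 1) * t ^ (1 - r) * u + (1 - r) * s ^ r * t ^ (-r) * v := by
  have hamgm := geom_mean_le_arith_mean2_weighted hr₀ (sub_nonneg.2 hr₁) (div_nonneg hu hs.le)
    (div_nonneg hv ht.le) (add_sub_cancel r 1)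
  calc u ^ r * v ^ (1 - r) = s ^ r * t ^ (1 - r) * ((u / s) ^ r * (v / t) ^ (1 - r)) := by
        rw [div_rpow hu hs.le, div_rpow hv ht.le]
        field_simp
    _ ≤ s ^ r * t ^ (1 - r) * (r * (u / s) + (1 - r) * (v / t)) := by gcongr
    _ = _ := by
        rw [rpow_sub_one hs.ne', rpow_neg ht.le, rpow_sub ht, rpow_one]
        field_simp

theorem rpow_mul_rpow_one_sub_eq_tangent_self {r s t : ℝ} (hs : 0 < s) (ht : 0 < t) :
    r * s ^ (r - 1) * t ^ (1 - r) * s + (1 - r) * s ^ r * t ^ (-r) * t = s ^ r * t ^ (1 - r) := by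
  rw [rpow_sub_one hs.ne', rpow_neg ht.le, rpow_sub ht, rpow_one]
  field_simp
  ring

theorem integral_tangent_eq {s t u v : ℝ} (hs : 0 < s) (ht : 0 < t) :
    (∫ r in (0 : ℝ)..1, r * s ^ (r - 1) * t ^ (1 - r)) * u
        + (∫ r in (0 : ℝ)..1, (1 - r) * s ^ r * t ^ (-r)) * v
      = ∫ r in (0 : ℝ)..1,
          r * s ^ (r - 1) * t ^ (1 - r) * u + (1 - r) * s ^ r * t ^ (-r) * v := by
  rw [← integral_mul_const, ← integral_mul_const, integral_add]
  all_goals exact Continuous.intervalIntegrable (by fun_prop (disch := positivity)) _ _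

theorem logMean0_le_tangent {s t u v : ℝ} (hs : 0 < s) (ht : 0 < t) (hu : 0 ≤ u)
    (hv : 0 ≤ v) :
    logMean0 u v ≤ (∫ r in (0 : ℝ)..1, r * s ^ (r - 1) * t ^ (1 - r)) * u
        + (∫ r in (0 : ℝ)..1, (1 - r) * s ^ r * t ^ (-r)) * v := by
  rw [integral_tangent_eq hs ht]
  by_cases hboundary : u ≤ 0 ∨ v ≤ 0
  · rw [logMean0, if_pos hboundary]
    refine integral_nonneg zero_le_one fun r hr => ?_
    have := hr.1; have := sub_nonneg.2 hr.2
    positivity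
  · obtain ⟨hu', hv'⟩ : 0 < u ∧ 0 < v := by simpa using hboundary
    rw [logMean0_eq_integral hu' hv']
    refine integral_mono_on zero_le_one ?_ ?_ fun r hr =>
      rpow_mul_rpow_one_sub_le_tangent hr.1 hr.2 hs ht hu hv
    all_goals exact Continuous.intervalIntegrable (by fun_prop (disch := positivity)) _ _

theorem logMean0_eq_tangent_self {s t : ℝ} (hs : 0 < s) (ht : 0 < t) :
    (∫ r in (0 : ℝ)..1, r * s ^ (r - 1) * t ^ (1 - r)) * s
        + (∫ r in (0 : ℝ)..1, (1 - r) * s ^ r * t ^ (-r)) * t = logMean0 s t := by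
  rw [integral_tangent_eq hs ht, logMean0_eq_integral hs ht]
  exact integral_congr fun r _ => rpow_mul_rpow_one_sub_eq_tangent_self hs ht

/-- Supergradient inequality for the logarithmic mean:
    for s,t > 0 and u,v ≥ 0, ∂₁θ(s,t)·u + ∂₂θ(s,t)·v ≥ θ(u,v),
    with equality when (u,v) = (s,t). -/
theorem logMean_supergradient (s t : ℝ) (hs : 0 < s) (ht : 0 < t) :
    (∀ u v : ℝ, 0 ≤ u → 0 ≤ v →
      logMean0 u v ≤ deriv (fun x => logMean0 x t) s * u
        + deriv (fun y => logMean0 s y) t * v) ∧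
    deriv (fun x => logMean0 x t) s * s + deriv (fun y => logMean0 s y) t * t
      = logMean0 s t := by
  rw [(hasDerivAt_logMean0_left hs ht).deriv, (hasDerivAt_logMean0_right hs ht).deriv]
  exact ⟨fun u v hu hv => logMean0_le_tangent hs ht hu hv, logMean0_eq_tangent_self hs ht⟩
end

section
/- The extended-valued function α(v,s,t) defined on ℝ × [0,∞)² by α(v,s,t) = v²/θ(s,t) when θ(s,t) > 0, α(v,s,t) = 0 when θ(s,t) = 0 and v = 0, and α(v,s,t) = +∞ when θ(s,t) = 0 and v ≠ 0, is convex on ℝ × [0,∞)². -/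
/-! The logarithmic mean θ is concave on `[0,∞)²`. Inside the quadrant,
`1 / θ(s,t) = ∫₀¹ dr / (r s + (1 - r) t)`, and integrating the joint convexity of
`(w, x) ↦ w² / x` along these segments yields concavity; on the boundary θ vanishes, and
monotonicity and homogeneity of θ suffice. Then `α(v,s,t) = sup_c (2 c v - c² θ(s,t))`, also with
the conventions at `θ = 0`, is a supremum of functions that are convex because θ is concave. -/

open scoped ENNReal

/-- The extended-valued action density α(v,s,t) = v²/θ(s,t), with the conventions
    0²/0 = 0 and v²/0 = +∞ for v ≠ 0. -/
noncomputable def alphaE (v s t : ℝ) : ℝ≥0∞ :=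
  if logMean0 s t = 0 then (if v = 0 then 0 else ⊤)
  else ENNReal.ofReal (v ^ 2 / logMean0 s t)

theorem convexOn_sq_div :
    ConvexOn ℝ (Set.univ ×ˢ Set.Ioi 0) fun p : ℝ × ℝ ↦ p.1 ^ 2 / p.2 := by
  refine ⟨convex_univ.prod (convex_Ioi 0), ?_⟩
  rintro ⟨w₁, x₁⟩ ⟨-, hx₁ : 0 < x₁⟩ ⟨w₂, x₂⟩ ⟨-, hx₂ : 0 < x₂⟩ a b ha hb hab
  have hx : 0 < a * x₁ + b * x₂ := convex_Ioi (0 : ℝ) hx₁ hx₂ ha hb hab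
  simp only [Prod.smul_mk, Prod.mk_add_mk, smul_eq_mul]
  rw [← mul_div_assoc, ← mul_div_assoc, div_add_div _ _ hx₁.ne' hx₂.ne',
    div_le_div_iff₀ hx (by positivity)]
  nlinarith [mul_nonneg (mul_nonneg ha hb) (sq_nonneg (w₁ * x₂ - w₂ * x₁))]

lemma logMean0_eq_zero {u v : ℝ} (h : u ≤ 0 ∨ v ≤ 0) : logMean0 u v = 0 := by
  rw [logMean0, if_pos h]

lemma logMean0_of_pos {u v : ℝ} (hu : 0 < u) (hv : 0 < v) :
    logMean0 u v = if u = v then v else (u - v) / (Real.log u - Real.log v) := by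
  rw [logMean0, if_neg (by push Not; exact ⟨hu, hv⟩)]

lemma logMean0_pos {u v : ℝ} (hu : 0 < u) (hv : 0 < v) : 0 < logMean0 u v := by
  rw [logMean0_of_pos hu hv]
  split_ifs with h
  · exact hv
  · rcases lt_or_gt_of_ne h with h | h
    · exact div_pos_of_neg_of_neg (by linarith) (by linarith [Real.log_lt_log hu h])
    · exact div_pos (by linarith) (by linarith [Real.log_lt_log hv h])

lemma logMean0_nonneg (u v : ℝ) : 0 ≤ logMean0 u v := by
  by_cases h : u ≤ 0 ∨ v ≤ 0
  · exact (logMean0_eq_zero h).ge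
  · push Not at h
    exact (logMean0_pos h.1 h.2).le

lemma logMean0_mul {c : ℝ} (hc : 0 ≤ c) (u v : ℝ) :
    logMean0 (c * u) (c * v) = c * logMean0 u v := by
  by_cases h : u ≤ 0 ∨ v ≤ 0
  · rw [logMean0_eq_zero h, logMean0_eq_zero (h.imp (mul_nonpos_of_nonneg_of_nonpos hc)
      (mul_nonpos_of_nonneg_of_nonpos hc)), mul_zero]
  push Not at h
  rcases hc.eq_or_lt with rfl | hc
  · simp [logMean0]
  rw [logMean0_of_pos (mul_pos hc h.1) (mul_pos hc h.2), logMean0_of_pos h.1 h.2]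
  simp only [mul_right_inj' hc.ne']
  split_ifs
  · rfl
  · rw [Real.log_mul hc.ne' h.1.ne', Real.log_mul hc.ne' h.2.ne', ← mul_sub, mul_div_assoc,
      add_sub_add_left_eq_sub]

open intervalIntegral

lemma mul_add_one_sub_mul_pos {u v r : ℝ} (hu : 0 < u) (hv : 0 < v)
    (hr : r ∈ Set.Icc (0 : ℝ) 1) : 0 < r * u + (1 - r) * v :=
  convex_Ioi (0 : ℝ) hu hv hr.1 (sub_nonneg.2 hr.2) (add_sub_cancel r 1)

lemma intervalIntegrable_inv_mul_add_one_sub_mul {u v : ℝ} (hu : 0 < u) (hv : 0 < v) :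
    IntervalIntegrable (fun r : ℝ ↦ (r * u + (1 - r) * v)⁻¹) MeasureTheory.volume 0 1 :=
  (ContinuousOn.inv₀ (by fun_prop) fun r hr ↦ (mul_add_one_sub_mul_pos hu hv
    (by rwa [Set.uIcc_of_le zero_le_one] at hr)).ne').intervalIntegrable

lemma inv_logMean0_eq_integral {u v : ℝ} (hu : 0 < u) (hv : 0 < v) :
    (logMean0 u v)⁻¹ = ∫ r in (0 : ℝ)..1, (r * u + (1 - r) * v)⁻¹ := by
  rw [logMean0_of_pos hu hv]
  split_ifs with h
  · simp [h, ← add_mul]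
  have hc : u - v ≠ 0 := sub_ne_zero.mpr h
  simp only [show ∀ r : ℝ, r * u + (1 - r) * v = (u - v) * r + v from fun r ↦ by ring]
  rw [integral_comp_mul_add (·⁻¹) hc v, mul_zero, zero_add, mul_one, sub_add_cancel,
    integral_inv fun h0 ↦ by rcases Set.mem_uIcc.mp h0 with ⟨h1, h2⟩ | ⟨h1, h2⟩ <;> linarith,
    Real.log_div hu.ne' hv.ne', smul_eq_mul, inv_div, div_eq_inv_mul]

lemma logMean0_mono {u v u' v' : ℝ} (hu : u ≤ u') (hv : v ≤ v') :
    logMean0 u v ≤ logMean0 u' v' := by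
  by_cases h : u ≤ 0 ∨ v ≤ 0
  · exact (logMean0_eq_zero h).trans_le (logMean0_nonneg u' v')
  push Not at h
  have hu' := h.1.trans_le hu
  have hv' := h.2.trans_le hv
  rw [← inv_le_inv₀ (logMean0_pos hu' hv') (logMean0_pos h.1 h.2),
    inv_logMean0_eq_integral h.1 h.2, inv_logMean0_eq_integral hu' hv']
  refine integral_mono_on zero_le_one (intervalIntegrable_inv_mul_add_one_sub_mul hu' hv')
    (intervalIntegrable_inv_mul_add_one_sub_mul h.1 h.2) fun r hr ↦ ?_
  gcongr
  · exact mul_add_one_sub_mul_pos h.1 h.2 hr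
  · exact hr.1
  · linarith [hr.2]

/-- With `m = a θ₁ + b θ₂`, integrating the convexity of `(w, x) ↦ w² / x` gives
`m² / Θ ≤ a θ₁² / θ₁ + b θ₂² / θ₂ = m`. -/
lemma logMean0_concave_of_pos {s₁ t₁ s₂ t₂ a b : ℝ} (hs₁ : 0 < s₁) (ht₁ : 0 < t₁)
    (hs₂ : 0 < s₂) (ht₂ : 0 < t₂) (ha : 0 ≤ a) (hb : 0 ≤ b) (hab : a + b = 1) :
    a * logMean0 s₁ t₁ + b * logMean0 s₂ t₂ ≤ logMean0 (a * s₁ + b * s₂) (a * t₁ + b * t₂) := by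
  set θ₁ := logMean0 s₁ t₁
  set θ₂ := logMean0 s₂ t₂
  set m := a * θ₁ + b * θ₂
  have hθ₁ : 0 < θ₁ := logMean0_pos hs₁ ht₁
  have hθ₂ : 0 < θ₂ := logMean0_pos hs₂ ht₂
  have hm : 0 < m := convex_Ioi (0 : ℝ) hθ₁ hθ₂ ha hb hab
  have hS : 0 < a * s₁ + b * s₂ := convex_Ioi (0 : ℝ) hs₁ hs₂ ha hb hab
  have hT : 0 < a * t₁ + b * t₂ := convex_Ioi (0 : ℝ) ht₁ ht₂ ha hb hab
  have hΘ := logMean0_pos hS hT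
  have I₁ := (intervalIntegrable_inv_mul_add_one_sub_mul hs₁ ht₁).const_mul (a * θ₁ ^ 2)
  have I₂ := (intervalIntegrable_inv_mul_add_one_sub_mul hs₂ ht₂).const_mul (b * θ₂ ^ 2)
  have key : m ^ 2 * (logMean0 (a * s₁ + b * s₂) (a * t₁ + b * t₂))⁻¹ ≤ m := calc
    _ = ∫ r in (0 : ℝ)..1,
          m ^ 2 * (r * (a * s₁ + b * s₂) + (1 - r) * (a * t₁ + b * t₂))⁻¹ := by
      rw [inv_logMean0_eq_integral hS hT, integral_const_mul]
    _ ≤ ∫ r in (0 : ℝ)..1, a * θ₁ ^ 2 * (r * s₁ + (1 - r) * t₁)⁻¹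
          + b * θ₂ ^ 2 * (r * s₂ + (1 - r) * t₂)⁻¹ := by
      refine integral_mono_on zero_le_one
        ((intervalIntegrable_inv_mul_add_one_sub_mul hS hT).const_mul _) (I₁.add I₂)
        fun r hr ↦ ?_
      have := convexOn_sq_div.2 (x := (θ₁, r * s₁ + (1 - r) * t₁))
        (y := (θ₂, r * s₂ + (1 - r) * t₂)) ⟨trivial, mul_add_one_sub_mul_pos hs₁ ht₁ hr⟩
        ⟨trivial, mul_add_one_sub_mul_pos hs₂ ht₂ hr⟩ ha hb hab
      simp only [Prod.smul_mk, Prod.mk_add_mk, smul_eq_mul] at this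
      refine le_of_eq_of_le ?_ (this.trans_eq ?_) <;> ring
    _ = a * θ₁ ^ 2 * θ₁⁻¹ + b * θ₂ ^ 2 * θ₂⁻¹ := by
      rw [integral_add I₁ I₂, integral_const_mul, integral_const_mul,
        ← inv_logMean0_eq_integral hs₁ ht₁, ← inv_logMean0_eq_integral hs₂ ht₂]
    _ = m := by
      rw [sq, sq, ← mul_assoc, ← mul_assoc, mul_inv_cancel_right₀ hθ₁.ne',
        mul_inv_cancel_right₀ hθ₂.ne']
  rw [← div_eq_mul_inv, div_le_iff₀ hΘ, sq] at key
  exact le_of_mul_le_mul_left key hm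

theorem concaveOn_logMean0 : ConcaveOn ℝ (Set.Ici 0) (Function.uncurry logMean0) := by
  refine ⟨convex_Ici 0, ?_⟩
  rintro ⟨s₁, t₁⟩ ⟨hs₁ : 0 ≤ s₁, ht₁ : 0 ≤ t₁⟩ ⟨s₂, t₂⟩ ⟨hs₂ : 0 ≤ s₂, ht₂ : 0 ≤ t₂⟩
    a b ha hb hab
  simp only [Prod.smul_mk, Prod.mk_add_mk, smul_eq_mul, Function.uncurry_apply_pair]
  by_cases h₁ : s₁ ≤ 0 ∨ t₁ ≤ 0
  · rw [logMean0_eq_zero h₁, mul_zero, zero_add, ← logMean0_mul hb]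
    exact logMean0_mono (by nlinarith) (by nlinarith)
  by_cases h₂ : s₂ ≤ 0 ∨ t₂ ≤ 0
  · rw [logMean0_eq_zero h₂, mul_zero, add_zero, ← logMean0_mul ha]
    exact logMean0_mono (by nlinarith) (by nlinarith)
  push Not at h₁ h₂
  exact logMean0_concave_of_pos h₁.1 h₁.2 h₂.1 h₂.2 ha hb hab

lemma ENNReal.ofReal_mul_add_mul_le {a b x y : ℝ} (ha : 0 ≤ a) (hb : 0 ≤ b) :
    ENNReal.ofReal (a * x + b * y)
      ≤ ENNReal.ofReal a * ENNReal.ofReal x + ENNReal.ofReal b * ENNReal.ofReal y := by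
  rw [← ENNReal.ofReal_mul ha, ← ENNReal.ofReal_mul hb]
  exact ENNReal.ofReal_add_le

lemma alphaE_eq_iSup (v s t : ℝ) :
    alphaE v s t = ⨆ c : ℝ, ENNReal.ofReal (2 * c * v - c ^ 2 * logMean0 s t) := by
  have hθ := logMean0_nonneg s t
  refine le_antisymm ?_ (iSup_le fun c ↦ ?_) <;> unfold alphaE <;> split_ifs with h₀ hv
  · exact zero_le
  · refine top_le_iff.2 <| ENNReal.eq_top_of_forall_nnreal_le fun n ↦
      le_iSup_of_le (n / (2 * v)) ?_
    rw [h₀, mul_zero, sub_zero, show 2 * ((n : ℝ) / (2 * v)) * v = n by field_simp,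
      ENNReal.ofReal_coe_nnreal]
  · refine le_iSup_of_le (v / logMean0 s t) (ENNReal.ofReal_le_ofReal (le_of_eq ?_))
    field_simp
    ring
  · simp [h₀, hv]
  · exact le_top
  · refine ENNReal.ofReal_le_ofReal ?_
    rw [le_div_iff₀ (hθ.lt_of_ne' h₀)]
    nlinarith [sq_nonneg (c * logMean0 s t - v)]

/-- α is convex on ℝ × [0,∞)², in the sense of extended-real-valued functions. -/
theorem alphaE_convex (v₁ s₁ t₁ v₂ s₂ t₂ : ℝ)
    (hs₁ : 0 ≤ s₁) (ht₁ : 0 ≤ t₁) (hs₂ : 0 ≤ s₂) (ht₂ : 0 ≤ t₂)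
    (a b : ℝ) (ha : 0 ≤ a) (hb : 0 ≤ b) (hab : a + b = 1) :
    alphaE (a * v₁ + b * v₂) (a * s₁ + b * s₂) (a * t₁ + b * t₂)
      ≤ ENNReal.ofReal a * alphaE v₁ s₁ t₁ + ENNReal.ofReal b * alphaE v₂ s₂ t₂ := by
  have hθ : a * logMean0 s₁ t₁ + b * logMean0 s₂ t₂
      ≤ logMean0 (a * s₁ + b * s₂) (a * t₁ + b * t₂) :=
    concaveOn_logMean0.2 (x := (s₁, t₁)) (y := (s₂, t₂)) ⟨hs₁, ht₁⟩ ⟨hs₂, ht₂⟩ ha hb hab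
  rw [alphaE_eq_iSup, alphaE_eq_iSup v₁, alphaE_eq_iSup v₂]
  refine iSup_le fun c ↦ ?_
  calc _ ≤ ENNReal.ofReal (a * (2 * c * v₁ - c ^ 2 * logMean0 s₁ t₁)
          + b * (2 * c * v₂ - c ^ 2 * logMean0 s₂ t₂)) :=
        ENNReal.ofReal_le_ofReal (by nlinarith [mul_le_mul_of_nonneg_left hθ (sq_nonneg c)])
    _ ≤ _ := (ENNReal.ofReal_mul_add_mul_le ha hb).trans <| by
      gcongr <;> exact le_iSup (fun c ↦ ENNReal.ofReal (2 * c * _ - c ^ 2 * _)) c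
end

section
/- Let α(v,s,t) = v²/θ(s,t) on ℝ × (0,∞)², where θ is the logarithmic mean. For two distinct points Z₁ = (v₁,s₁,t₁) and Z₂ = (v₂,s₂,t₂) in ℝ × (0,∞)², the function α is affine on the segment [Z₁,Z₂] if and only if either v₁ = v₂ = 0, or there exists κ > 0 with κ ≠ 1 such that Z₂ = κ·Z₁. -/
/-- The action density α(v,s,t) = v²/θ(s,t) on ℝ × (0,∞)². -/
noncomputable def alphaR (v s t : ℝ) : ℝ := v ^ 2 / logMean s t

open Real Set

lemma logMean_pos {u w : ℝ} (hu : 0 < u) (hw : 0 < w) : 0 < logMean u w := by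
  unfold logMean
  split_ifs with h
  · exact hw
  · rcases lt_or_gt_of_ne h with h | h
    · exact div_pos_of_neg_of_neg (by linarith) (by linarith [log_lt_log hu h])
    · exact div_pos (by linarith) (by linarith [log_lt_log hw h])

lemma logMean_mul_log_sub_log {u w : ℝ} (hu : 0 < u) (hw : 0 < w) :
    logMean u w * (log u - log w) = u - w := by
  unfold logMean
  split_ifs with h
  · simp [h]
  · have : log u - log w ≠ 0 := sub_ne_zero.2 fun hlog => h (log_injOn_pos hu hw hlog)
    field_simp

lemma logMean_mul_left {c u w : ℝ} (hc : 0 < c) (hu : 0 < u) (hw : 0 < w) :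
    logMean (c * u) (c * w) = c * logMean u w := by
  simp only [logMean, mul_right_inj' hc.ne', log_mul hc.ne' hu.ne', log_mul hc.ne' hw.ne',
    add_sub_add_left_eq_sub]
  split_ifs <;> ring

lemma alphaR_mul_left {c v s t : ℝ} (hc : 0 < c) (hs : 0 < s) (ht : 0 < t) :
    alphaR (c * v) (c * s) (c * t) = c * alphaR v s t := by
  have := (logMean_pos hs ht).ne'
  rw [alphaR, alphaR, logMean_mul_left hc hs ht]
  field_simp

lemma sq_mul_log_sub_log_of_alphaR_eq {v s t c : ℝ} (hs : 0 < s) (ht : 0 < t)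
    (h : alphaR v s t = c) : v ^ 2 * (log s - log t) = c * (s - t) := by
  rw [alphaR, div_eq_iff (logMean_pos hs ht).ne'] at h
  rw [h, mul_assoc, logMean_mul_log_sub_log hs ht]

lemma add_sub_mul_pos {x y τ : ℝ} (hx : 0 < x) (hy : 0 < y) (hτ : τ ∈ Icc (0:ℝ) 1) :
    0 < x + (y - x) * τ := by
  have := convex_Ioi (0:ℝ) hx hy (sub_nonneg.2 hτ.2) hτ.1 (sub_add_cancel 1 τ)
  simp only [smul_eq_mul, mem_Ioi] at this
  linarith

lemma eq_of_eqOn_Ioo_of_analyticAt {f g : ℝ → ℝ} {x y : ℝ} (hxy : x < y)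
    (hf : ∀ z, AnalyticAt ℝ f z) (hg : ∀ z, AnalyticAt ℝ g z) (h : EqOn f g (Ioo x y)) :
    f = g := by
  obtain ⟨z, hz⟩ := nonempty_Ioo.2 hxy
  exact AnalyticOnNhd.eq_of_eventuallyEq (fun z _ => hf z) (fun z _ => hg z)
    (Filter.eventuallyEq_of_mem (Ioo_mem_nhds hz.1 hz.2) h)

lemma hasDerivAt_log_sub_log {s a t b τ : ℝ} (hS : 0 < s + a * τ) (hT : 0 < t + b * τ) :
    HasDerivAt (fun x => log (s + a * x) - log (t + b * x))
      ((a * t - b * s) / ((s + a * τ) * (t + b * τ))) τ := by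
  have hS' : HasDerivAt (fun x => s + a * x) a τ :=
    (((hasDerivAt_id' τ).const_mul a).const_add s).congr_deriv (mul_one a)
  have hT' : HasDerivAt (fun x => t + b * x) b τ :=
    (((hasDerivAt_id' τ).const_mul b).const_add t).congr_deriv (mul_one b)
  refine ((hS'.log hS.ne').sub (hT'.log hT.ne')).congr_deriv ?_
  rw [div_sub_div _ _ hS.ne' hT.ne']
  ring

lemma cubic_identity_of_log_identity {v m s a t b A B : ℝ}
    (hS : ∀ τ ∈ Icc (0:ℝ) 1, 0 < s + a * τ) (hT : ∀ τ ∈ Icc (0:ℝ) 1, 0 < t + b * τ)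
    (h : ∀ τ ∈ Icc (0:ℝ) 1, (v + m * τ) ^ 2 * (log (s + a * τ) - log (t + b * τ))
        = (A * τ + B) * ((s + a * τ) - (t + b * τ))) (y : ℝ) :
    (a * t - b * s) * (v + m * y) ^ 3 = (s + a * y) * (t + b * y) *
      ((v + m * y) * (A * ((s + a * y) - (t + b * y)) + (A * y + B) * (a - b))
        - 2 * m * ((A * y + B) * ((s + a * y) - (t + b * y)))) := by
  revert y
  refine funext_iff.1 (eq_of_eqOn_Ioo_of_analyticAt zero_lt_one (fun _ => by fun_prop)
    (fun _ => by fun_prop) fun τ hτ => ?_)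
  have hτ' := Ioo_subset_Icc_self hτ
  have hF : HasDerivAt
      (fun x => (v + m * x) ^ 2 * (log (s + a * x) - log (t + b * x))
        - (A * x + B) * ((s + a * x) - (t + b * x)))
      (2 * m * (v + m * τ) * (log (s + a * τ) - log (t + b * τ))
        + (v + m * τ) ^ 2 * ((a * t - b * s) / ((s + a * τ) * (t + b * τ)))
        - (A * ((s + a * τ) - (t + b * τ)) + (A * τ + B) * (a - b))) τ := by
    have hV : HasDerivAt (fun x => (v + m * x) ^ 2) (2 * m * (v + m * τ)) τ :=
      ((((hasDerivAt_id' τ).const_mul m).const_add v).pow 2).congr_deriv (by push_cast; ring)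
    have hP : HasDerivAt (fun x => (A * x + B) * ((s + a * x) - (t + b * x)))
        (A * ((s + a * τ) - (t + b * τ)) + (A * τ + B) * (a - b)) τ :=
      ((((hasDerivAt_id' τ).const_mul A).add_const B).mul
        ((((hasDerivAt_id' τ).const_mul a).const_add s).sub
          (((hasDerivAt_id' τ).const_mul b).const_add t))).congr_deriv
        (by simp only [Pi.sub_apply]; ring)
    exact (hV.mul (hasDerivAt_log_sub_log (hS τ hτ') (hT τ hτ'))).sub hP
  have hF0 : (fun x => (v + m * x) ^ 2 * (log (s + a * x) - log (t + b * x))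
      - (A * x + B) * ((s + a * x) - (t + b * x))) =ᶠ[nhds τ] fun _ => 0 :=
    Filter.eventuallyEq_of_mem (Ioo_mem_nhds hτ.1 hτ.2) fun x hx =>
      sub_eq_zero.2 (h x (Ioo_subset_Icc_self hx))
  have hD := hF.unique ((hasDerivAt_const τ (0:ℝ)).congr_of_eventuallyEq hF0)
  have hq : (a * t - b * s) / ((s + a * τ) * (t + b * τ)) * ((s + a * τ) * (t + b * τ))
      = a * t - b * s := div_mul_cancel₀ _ (mul_pos (hS τ hτ') (hT τ hτ')).ne'
  linear_combination (v + m * τ) * (s + a * τ) * (t + b * τ) * hD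
    - 2 * m * (s + a * τ) * (t + b * τ) * h τ hτ' - (v + m * τ) ^ 3 * hq

lemma eq_zero_of_cubic_identity {v m s a t b A B : ℝ} (hΔ : a * t - b * s ≠ 0)
    (h : ∀ y, (a * t - b * s) * (v + m * y) ^ 3 = (s + a * y) * (t + b * y) *
      ((v + m * y) * (A * ((s + a * y) - (t + b * y)) + (A * y + B) * (a - b))
        - 2 * m * ((A * y + B) * ((s + a * y) - (t + b * y))))) :
    v = 0 ∧ m = 0 := by
  have root : ∀ y, (s + a * y) * (t + b * y) = 0 → v + m * y = 0 := fun y hy =>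
    pow_eq_zero_iff three_ne_zero |>.1 <|
      (mul_eq_zero.1 ((h y).trans (by rw [hy, zero_mul]))).resolve_left hΔ
  have hroot_s (ha : a ≠ 0) : v + m * (-s / a) = 0 := root _ (by field_simp; ring)
  have hroot_t (hb : b ≠ 0) : v + m * (-t / b) = 0 := root _ (by field_simp; ring)
  -- the third finite difference of a cubic is six times its leading coefficient
  have hlead : (a * t - b * s) * m ^ 3
      = a * b * (2 * A * (a - b) * v - m * (A * (s - t) + B * (a - b))) := by
    linear_combination (h 3 - 3 * h 2 + 3 * h 1 - h 0) / 6
  by_cases hab : a = 0 ∨ b = 0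
  · have hm : m = 0 := pow_eq_zero_iff three_ne_zero |>.1 <|
      (mul_eq_zero.1 (hlead.trans (by rcases hab with rfl | rfl <;> ring))).resolve_left hΔ
    subst hm
    rcases hab with rfl | rfl
    · simpa using hroot_t fun hb => hΔ (by simp [hb])
    · simpa using hroot_s fun ha => hΔ (by simp [ha])
  · obtain ⟨ha, hb⟩ : a ≠ 0 ∧ b ≠ 0 := not_or.1 hab
    have hm : m * (-s / a - -t / b) = 0 := by linear_combination hroot_s ha - hroot_t hb
    have hst : -s / a - -t / b ≠ 0 := by
      rw [show -s / a - -t / b = (a * t - b * s) / (a * b) by field_simp; ring]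
      exact div_ne_zero hΔ (mul_ne_zero ha hb)
    have hm : m = 0 := (mul_eq_zero.1 hm).resolve_right hst
    exact ⟨by simpa [hm] using hroot_s ha, hm⟩

lemma eq_zero_of_alphaR_eq_affine {v m s a t b A B : ℝ} (hΔ : a * t - b * s ≠ 0)
    (hS : ∀ τ ∈ Icc (0:ℝ) 1, 0 < s + a * τ) (hT : ∀ τ ∈ Icc (0:ℝ) 1, 0 < t + b * τ)
    (h : ∀ τ ∈ Icc (0:ℝ) 1, alphaR (v + m * τ) (s + a * τ) (t + b * τ) = A * τ + B) :
    v = 0 ∧ m = 0 :=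
  eq_zero_of_cubic_identity hΔ <| cubic_identity_of_log_identity hS hT fun τ hτ =>
    sq_mul_log_sub_log_of_alphaR_eq (hS τ hτ) (hT τ hτ) (h τ hτ)

lemma eq_sub_one_mul_of_sq_eq {v m A B κ : ℝ}
    (h : ∀ τ ∈ Icc (0:ℝ) 1, (v + m * τ) ^ 2 = (A * τ + B) * (1 + (κ - 1) * τ)) :
    m = (κ - 1) * v := by
  have h' : ∀ y, (v + m * y) ^ 2 = (A * y + B) * (1 + (κ - 1) * y) :=
    funext_iff.1 (eq_of_eqOn_Ioo_of_analyticAt zero_lt_one (fun _ => by fun_prop)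
      (fun _ => by fun_prop) fun τ hτ => h τ (Ioo_subset_Icc_self hτ))
  rcases eq_or_ne κ 1 with rfl | hκ
  · have hm : m ^ 2 = 0 := by linear_combination (h' 2 - 2 * h' 1 + h' 0) / 2
    simpa using hm
  · have hκ' : 1 - κ ≠ 0 := sub_ne_zero.2 hκ.symm
    have hy := h' (1 / (1 - κ))
    rw [show 1 + (κ - 1) * (1 / (1 - κ)) = 0 by field_simp; ring, mul_zero,
      pow_eq_zero_iff two_ne_zero] at hy
    field_simp at hy
    linear_combination hy

lemma eq_sub_one_mul_of_alphaR_eq_on_ray {v m s t κ A B : ℝ} (hs : 0 < s) (ht : 0 < t)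
    (hκ : 0 < κ) (h : ∀ τ ∈ Icc (0:ℝ) 1,
      alphaR (v + m * τ) ((1 + (κ - 1) * τ) * s) ((1 + (κ - 1) * τ) * t) = A * τ + B) :
    m = (κ - 1) * v :=
  eq_sub_one_mul_of_sq_eq (A := A * logMean s t) (B := B * logMean s t) fun τ hτ => by
    have hθ := logMean_pos hs ht
    have hℓ := add_sub_mul_pos one_pos hκ hτ
    have := h τ hτ
    rw [alphaR, logMean_mul_left hℓ hs ht, div_eq_iff (by positivity)] at this
    linear_combination this

/-- Characterization of the affine segments of α on ℝ × (0,∞)²: for distinct points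
    Z₁ = (v₁,s₁,t₁), Z₂ = (v₂,s₂,t₂), α is affine on [Z₁,Z₂] iff v₁ = v₂ = 0 or
    Z₂ = κ·Z₁ for some κ > 0, κ ≠ 1. -/
theorem alphaR_affine_iff (v₁ s₁ t₁ v₂ s₂ t₂ : ℝ)
    (hs₁ : 0 < s₁) (ht₁ : 0 < t₁) (hs₂ : 0 < s₂) (ht₂ : 0 < t₂)
    (hne : (v₁, s₁, t₁) ≠ (v₂, s₂, t₂)) :
    (∃ A B : ℝ, ∀ τ ∈ Set.Icc (0:ℝ) 1,
        alphaR ((1 - τ) * v₁ + τ * v₂) ((1 - τ) * s₁ + τ * s₂) ((1 - τ) * t₁ + τ * t₂)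
          = A * τ + B)
      ↔ (v₁ = 0 ∧ v₂ = 0) ∨
        ∃ κ : ℝ, 0 < κ ∧ κ ≠ 1 ∧ (v₂, s₂, t₂) = (κ * v₁, κ * s₁, κ * t₁) := by
  have seg (x y τ : ℝ) : (1 - τ) * x + τ * y = x + (y - x) * τ := by ring
  have ray (κ x τ : ℝ) : x + (κ * x - x) * τ = (1 + (κ - 1) * τ) * x := by ring
  simp only [seg]
  constructor
  · rintro ⟨A, B, h⟩
    by_cases hΔ : (s₂ - s₁) * t₁ - (t₂ - t₁) * s₁ = 0
    · obtain ⟨κ, hκ, rfl, rfl⟩ : ∃ κ, 0 < κ ∧ s₂ = κ * s₁ ∧ t₂ = κ * t₁ :=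
        ⟨s₂ / s₁, div_pos hs₂ hs₁, by field_simp, by field_simp; linear_combination -hΔ⟩
      simp only [ray] at h
      have hv := eq_sub_one_mul_of_alphaR_eq_on_ray hs₁ ht₁ hκ h
      refine Or.inr ⟨κ, hκ, ?_, by rw [show v₂ = κ * v₁ by linear_combination hv]⟩
      rintro rfl
      exact hne (by simp only [one_mul, Prod.mk.injEq, and_true]; linarith)
    · obtain ⟨hv₁, hm⟩ := eq_zero_of_alphaR_eq_affine hΔ
        (fun τ => add_sub_mul_pos hs₁ hs₂) (fun τ => add_sub_mul_pos ht₁ ht₂) h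
      exact Or.inl ⟨hv₁, by linarith⟩
  · rintro (⟨rfl, rfl⟩ | ⟨κ, hκ, -, hZ⟩)
    · exact ⟨0, 0, fun τ _ => by simp [alphaR]⟩
    · obtain ⟨rfl, rfl, rfl⟩ : v₂ = κ * v₁ ∧ s₂ = κ * s₁ ∧ t₂ = κ * t₁ := by
        simpa [Prod.ext_iff] using hZ
      refine ⟨(κ - 1) * alphaR v₁ s₁ t₁, alphaR v₁ s₁ t₁, fun τ hτ => ?_⟩
      rw [ray, ray, ray, alphaR_mul_left (add_sub_mul_pos one_pos hκ hτ) hs₁ ht₁]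
      ring
end

section
/- Let 𝒳 be a finite set with reversible data (K, ϖ), and let ν : 𝒳 → [0,∞). For Ψ : 𝒳×𝒳 → ℝ and its antisymmetrization Ψ̌(x,y) = ½Ψ(x,y) − ½Ψ(y,x), the weighted action satisfies A'(ν, Ψ̌) ≤ A'(ν, Ψ), where A'(ν,Ψ) = ½ Σ_{x,y} α(Ψ(x,y), ν(x), ν(y)) K(x,y) ϖ(x), with α(v,s,t) = v²/θ(s,t) (conventions 0/0 = 0, v²/0 = +∞ for v ≠ 0) and θ the logarithmic mean extended by 0 on the boundary. -/
open scoped ENNReal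

lemma logMean0_comm (u v : ℝ) : logMean0 u v = logMean0 v u := by
  unfold logMean0
  by_cases hbdry : u ≤ 0 ∨ v ≤ 0
  · rw [if_pos hbdry, if_pos hbdry.symm]
  · rw [if_neg hbdry, if_neg (mt Or.symm hbdry)]
    by_cases heq : u = v
    · rw [if_pos heq, if_pos heq.symm, heq]
    · rw [if_neg heq, if_neg (Ne.symm heq), ← neg_div_neg_eq, neg_sub, neg_sub]

lemma alphaE_comm (v s t : ℝ) : alphaE v s t = alphaE v t s := by
  rw [alphaE, alphaE, logMean0_comm]

lemma alphaE_half_sub_half_le (a b s t : ℝ) :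
    alphaE (1 / 2 * a - 1 / 2 * b) s t ≤ 2⁻¹ * alphaE a s t + 2⁻¹ * alphaE b s t := by
  unfold alphaE
  by_cases hθ : logMean0 s t = 0
  · simp only [hθ, if_true]
    split_ifs <;> simp_all
  · have hθpos : 0 < logMean0 s t := (logMean0_nonneg s t).lt_of_ne' hθ
    simp only [hθ, if_false]
    have hhalf : (2⁻¹ : ℝ≥0∞) = ENNReal.ofReal 2⁻¹ := by
      rw [ENNReal.ofReal_inv_of_pos two_pos, ENNReal.ofReal_ofNat]
    rw [hhalf, ← ENNReal.ofReal_mul (by norm_num), ← ENNReal.ofReal_mul (by norm_num),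
      ← ENNReal.ofReal_add (by positivity) (by positivity)]
    refine ENNReal.ofReal_le_ofReal ?_
    rw [← mul_div_assoc, ← mul_div_assoc, ← add_div]
    gcongr
    nlinarith [sq_nonneg (a + b)]

lemma sum_sum_transpose_mul_reversible {X : Type*} [Fintype X] (K : X → X → ℝ) (ϖ : X → ℝ)
    (hrev : ∀ x y, K x y * ϖ x = K y x * ϖ y) (F : X → X → ℝ≥0∞) :
    ∑ x, ∑ y, F y x * ENNReal.ofReal (K x y * ϖ x)
      = ∑ x, ∑ y, F x y * ENNReal.ofReal (K x y * ϖ x) := by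
  rw [Finset.sum_comm]
  simp_rw [hrev]

theorem action_antisymmetrization_le_general {X : Type*} [Fintype X]
    (K : X → X → ℝ) (ϖ : X → ℝ)
    (hrev : ∀ x y, K x y * ϖ x = K y x * ϖ y)
    (ν : X → ℝ) (Ψ : X → X → ℝ) :
    (1 / 2 : ℝ≥0∞) * ∑ x : X, ∑ y : X,
        alphaE ((1 / 2) * Ψ x y - (1 / 2) * Ψ y x) (ν x) (ν y)
          * ENNReal.ofReal (K x y * ϖ x)
      ≤ (1 / 2 : ℝ≥0∞) * ∑ x : X, ∑ y : X,
          alphaE (Ψ x y) (ν x) (ν y) * ENNReal.ofReal (K x y * ϖ x) := by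
  set F : X → X → ℝ≥0∞ := fun x y => alphaE (Ψ x y) (ν x) (ν y)
  set w : X → X → ℝ≥0∞ := fun x y => ENNReal.ofReal (K x y * ϖ x)
  have hF : ∀ x y, alphaE (Ψ y x) (ν x) (ν y) = F y x := fun x y => alphaE_comm _ _ _
  refine mul_le_mul_right ?_ _
  calc ∑ x, ∑ y, alphaE (1 / 2 * Ψ x y - 1 / 2 * Ψ y x) (ν x) (ν y) * w x y
      ≤ ∑ x, ∑ y, (2⁻¹ * F x y + 2⁻¹ * F y x) * w x y := by
        gcongr with x _ y _
        rw [← hF x y]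
        exact alphaE_half_sub_half_le _ _ _ _
    _ = 2⁻¹ * ∑ x, ∑ y, F x y * w x y + 2⁻¹ * ∑ x, ∑ y, F y x * w x y := by
        simp only [add_mul, Finset.sum_add_distrib, Finset.mul_sum, mul_assoc]
    _ = ∑ x, ∑ y, F x y * w x y := by
        rw [sum_sum_transpose_mul_reversible K ϖ hrev F, ← add_mul, ENNReal.inv_two_add_inv_two,
          one_mul]

/-- Antisymmetrization does not increase the weighted action:
    A'(ν, Ψ̌) ≤ A'(ν, Ψ) where Ψ̌(x,y) = ½Ψ(x,y) − ½Ψ(y,x) and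
    A'(ν,Ψ) = ½ Σ_{x,y} α(Ψ(x,y), ν(x), ν(y)) K(x,y) ϖ(x). -/
theorem action_antisymmetrization_le {X : Type*} [Fintype X]
    (K : X → X → ℝ) (ϖ : X → ℝ)
    (hK : ∀ x y, 0 ≤ K x y) (hϖ : ∀ x, 0 < ϖ x)
    (hrev : ∀ x y, K x y * ϖ x = K y x * ϖ y)
    (ν : X → ℝ) (hν : ∀ x, 0 ≤ ν x) (Ψ : X → X → ℝ) :
    (1 / 2 : ℝ≥0∞) * ∑ x : X, ∑ y : X,
        alphaE ((1 / 2) * Ψ x y - (1 / 2) * Ψ y x) (ν x) (ν y)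
          * ENNReal.ofReal (K x y * ϖ x)
      ≤ (1 / 2 : ℝ≥0∞) * ∑ x : X, ∑ y : X,
          alphaE (Ψ x y) (ν x) (ν y) * ENNReal.ofReal (K x y * ϖ x) :=
  action_antisymmetrization_le_general K ϖ hrev ν Ψ
end
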